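/- Let α > 0, let ω > 0, let w : ℝ → ℂ be four times continuously differentiable on [0, α] with w(0) = 0 and w'(0) = 0, and set F(x) = w''''(x) - ω⁴·w(x), C₁' = w'''(α) + i·ω·w''(α) - ω²·w'(α) - i·ω³·w(α), and C₂' = w''(α) - ω²·w(α). Then: 2·ω·w'(α) - 2·ω²·w(α) = (1 + i)·C₂'·(1 - exp(-α·ω)·exp(i·α·ω)) + (C₁'/ω)·(exp(-α·ω)·(sin(α·ω) + cos(α·ω)) - 1) + 2·∫₀^α ∫_α^τ exp(-ω·(α - τ))·sin(ω·(τ - s))·F(s) ds dτ. -/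

import Mathlib

/-!
With `u = w'' - ω²w` the source is `F = u'' + ω²u`, so by variation of parameters
`∫_α^τ sin(ω(τ - s)) F(s) ds = ω u(τ) - sin(ω(τ - α)) u'(α) - ω cos(ω(τ - α)) u(α)`.
With `v = w' - ωw` one has `u = v' + ωv`, hence `e^{ω(τ-α)} u(τ)` is the derivative of
`e^{ω(τ-α)} v(τ)` and integrates over `[0, α]` to `v(α)`, because `v(0) = 0`; the other two outer
integrals are the elementary `∫ eˣ sin x` and `∫ eˣ cos x`. The identity is then algebra, using
`C₁' = u'(α) + iω u(α)`, `C₂' = u(α)` and `exp(iαω) = cos(αω) + i sin(αω)`.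
-/

open Complex intervalIntegral

theorem integral_sin_mul_deriv2_add_sq_mul {u u' u'' : ℝ → ℂ} {ω a t : ℝ}
    (hu : ∀ s ∈ Set.uIcc a t, HasDerivAt u (u' s) s)
    (hu' : ∀ s ∈ Set.uIcc a t, HasDerivAt u' (u'' s) s)
    (hint : IntervalIntegrable (fun s => u'' s + (ω : ℂ) ^ 2 * u s) MeasureTheory.volume a t) :
    ∫ s in a..t, (Real.sin (ω * (t - s)) : ℂ) * (u'' s + (ω : ℂ) ^ 2 * u s)
      = ω * u t - Real.sin (ω * (t - a)) * u' a - ω * Real.cos (ω * (t - a)) * u a := by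
  have hderiv : ∀ s ∈ Set.uIcc a t, HasDerivAt
      (fun s => (Real.sin (ω * (t - s)) : ℂ) * u' s + ω * Real.cos (ω * (t - s)) * u s)
      ((Real.sin (ω * (t - s)) : ℂ) * (u'' s + (ω : ℂ) ^ 2 * u s)) s := by
    intro s hs
    have hlin : HasDerivAt (fun s : ℝ => ω * (t - s)) (-ω) s := by
      simpa using ((hasDerivAt_id s).const_sub t).const_mul ω
    have hsin := ((Real.hasDerivAt_sin _).comp s hlin).ofReal_comp
    have hcos := ((Real.hasDerivAt_cos _).comp s hlin).ofReal_comp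
    refine ((hsin.mul (hu' s hs)).add ((hcos.const_mul (ω : ℂ)).mul (hu s hs))).congr_deriv ?_
    simp only [Function.comp_apply]; push_cast; ring
  rw [integral_eq_sub_of_hasDerivAt hderiv (hint.continuousOn_mul (by fun_prop))]
  simp only [sub_self, mul_zero, Real.sin_zero, Real.cos_zero]
  push_cast; ring

theorem integral_exp_mul_deriv_add_mul {v v' : ℝ → ℂ} {ω c a b : ℝ}
    (hv : ∀ x ∈ Set.uIcc a b, HasDerivAt v (v' x) x)
    (hint : IntervalIntegrable v' MeasureTheory.volume a b) :
    ∫ x in a..b, (Real.exp (ω * (x - c)) : ℂ) * (v' x + ω * v x)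
      = Real.exp (ω * (b - c)) * v b - Real.exp (ω * (a - c)) * v a := by
  have hderiv : ∀ x ∈ Set.uIcc a b, HasDerivAt (fun x => (Real.exp (ω * (x - c)) : ℂ) * v x)
      ((Real.exp (ω * (x - c)) : ℂ) * (v' x + ω * v x)) x := by
    intro x hx
    have hlin : HasDerivAt (fun x : ℝ => ω * (x - c)) ω x := by
      simpa using ((hasDerivAt_id x).sub_const c).const_mul ω
    refine (((Real.hasDerivAt_exp _).comp x hlin).ofReal_comp.mul (hv x hx)).congr_deriv ?_
    simp only [Function.comp_apply]; push_cast; ring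
  have hvc : ContinuousOn v (Set.uIcc a b) :=
    fun x hx => (hv x hx).continuousAt.continuousWithinAt
  exact integral_eq_sub_of_hasDerivAt hderiv
    ((hint.add (hvc.const_smul (ω : ℂ)).intervalIntegrable).continuousOn_mul (by fun_prop))

theorem integral_exp_mul_sin (a b : ℝ) :
    ∫ x in a..b, Real.exp x * Real.sin x
      = (Real.exp b * (Real.sin b - Real.cos b) - Real.exp a * (Real.sin a - Real.cos a)) / 2 := by
  have hderiv : ∀ x ∈ Set.uIcc a b, HasDerivAt
      (fun x => Real.exp x * (Real.sin x - Real.cos x) / 2) (Real.exp x * Real.sin x) x := by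
    intro x _
    refine (((Real.hasDerivAt_exp x).mul
      ((Real.hasDerivAt_sin x).sub (Real.hasDerivAt_cos x))).div_const 2).congr_deriv ?_
    simp only [Pi.sub_apply]; ring
  rw [integral_eq_sub_of_hasDerivAt hderiv ((by fun_prop : Continuous _).intervalIntegrable _ _)]
  ring

theorem integral_exp_mul_cos (a b : ℝ) :
    ∫ x in a..b, Real.exp x * Real.cos x
      = (Real.exp b * (Real.sin b + Real.cos b) - Real.exp a * (Real.sin a + Real.cos a)) / 2 := by
  have hderiv : ∀ x ∈ Set.uIcc a b, HasDerivAt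
      (fun x => Real.exp x * (Real.sin x + Real.cos x) / 2) (Real.exp x * Real.cos x) x := by
    intro x _
    refine (((Real.hasDerivAt_exp x).mul
      ((Real.hasDerivAt_sin x).add (Real.hasDerivAt_cos x))).div_const 2).congr_deriv ?_
    simp only [Pi.add_apply]; ring
  rw [integral_eq_sub_of_hasDerivAt hderiv ((by fun_prop : Continuous _).intervalIntegrable _ _)]
  ring

theorem integral_comp_mul_sub_self {ω : ℝ} (hω : ω ≠ 0) (α : ℝ) (f : ℝ → ℝ) :
    ∫ τ in (0:ℝ)..α, f (ω * (τ - α)) = ω⁻¹ * ∫ x in -(α * ω)..0, f x := by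
  simp_rw [mul_sub]
  rw [integral_comp_mul_sub f hω, smul_eq_mul]
  congr 2 <;> ring

theorem integral_exp_mul_sin_mul_sub_self {ω : ℝ} (hω : ω ≠ 0) (α : ℝ) :
    ∫ τ in (0:ℝ)..α, Real.exp (ω * (τ - α)) * Real.sin (ω * (τ - α))
      = (Real.exp (-(α * ω)) * (Real.sin (α * ω) + Real.cos (α * ω)) - 1) / (2 * ω) := by
  rw [integral_comp_mul_sub_self hω α fun x => Real.exp x * Real.sin x, integral_exp_mul_sin]
  simp only [Real.exp_zero, Real.sin_zero, Real.cos_zero, Real.sin_neg, Real.cos_neg]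
  field_simp
  ring

theorem integral_exp_mul_cos_mul_sub_self {ω : ℝ} (hω : ω ≠ 0) (α : ℝ) :
    ∫ τ in (0:ℝ)..α, Real.exp (ω * (τ - α)) * Real.cos (ω * (τ - α))
      = (1 - Real.exp (-(α * ω)) * (Real.cos (α * ω) - Real.sin (α * ω))) / (2 * ω) := by
  rw [integral_comp_mul_sub_self hω α fun x => Real.exp x * Real.cos x, integral_exp_mul_cos]
  simp only [Real.exp_zero, Real.sin_zero, Real.cos_zero, Real.sin_neg, Real.cos_neg]
  field_simp
  ring

theorem integral_exp_mul_integral_sin_mul {ω α : ℝ} (hω : ω ≠ 0) (hα : 0 ≤ α)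
    {u u' u'' v : ℝ → ℂ}
    (hu : ∀ x ∈ Set.Icc 0 α, HasDerivAt u (u' x) x)
    (hu' : ∀ x ∈ Set.Icc 0 α, HasDerivAt u' (u'' x) x)
    (hu'' : ContinuousOn u'' (Set.Icc 0 α))
    (hv : ∀ x ∈ Set.Icc 0 α, HasDerivAt v (u x - ω * v x) x) (hv0 : v 0 = 0) :
    ∫ τ in (0:ℝ)..α, ∫ s in α..τ,
        ((Real.exp (-(ω * (α - τ))) * Real.sin (ω * (τ - s)) : ℝ) : ℂ) * (u'' s + (ω : ℂ) ^ 2 * u s)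
      = ω * v α
        - u' α * ((Real.exp (-(α * ω)) * (Real.sin (α * ω) + Real.cos (α * ω)) - 1) / (2 * ω) : ℝ)
        - u α * ((1 - Real.exp (-(α * ω)) * (Real.cos (α * ω) - Real.sin (α * ω))) / 2 : ℝ) := by
  have hIcc : Set.uIcc 0 α = Set.Icc 0 α := Set.uIcc_of_le hα
  have hcont_u : ContinuousOn u (Set.Icc 0 α) :=
    fun x hx => (hu x hx).continuousAt.continuousWithinAt
  have hcont_v : ContinuousOn v (Set.Icc 0 α) :=
    fun x hx => (hv x hx).continuousAt.continuousWithinAt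
  have hinner : ∀ τ ∈ Set.uIcc 0 α, ∫ s in α..τ,
      ((Real.exp (-(ω * (α - τ))) * Real.sin (ω * (τ - s)) : ℝ) : ℂ) * (u'' s + (ω : ℂ) ^ 2 * u s)
      = ω * (Real.exp (ω * (τ - α)) * u τ)
        - (((Real.exp (ω * (τ - α)) * Real.sin (ω * (τ - α)) : ℝ) : ℂ) * u' α
          + ((Real.exp (ω * (τ - α)) * Real.cos (ω * (τ - α)) : ℝ) : ℂ) * (ω * u α)) := by
    intro τ hτ
    rw [hIcc] at hτ
    have hsub : Set.uIcc α τ ⊆ Set.Icc 0 α := by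
      rw [Set.uIcc_of_ge hτ.2]; exact Set.Icc_subset_Icc hτ.1 le_rfl
    have hint : IntervalIntegrable (fun s => u'' s + (ω : ℂ) ^ 2 * u s) MeasureTheory.volume α τ :=
      ((hu''.add (continuousOn_const.mul hcont_u)).mono hsub).intervalIntegrable
    have hpull : ∀ s, ((Real.exp (-(ω * (α - τ))) * Real.sin (ω * (τ - s)) : ℝ) : ℂ)
        * (u'' s + (ω : ℂ) ^ 2 * u s)
        = Real.exp (ω * (τ - α))
          * ((Real.sin (ω * (τ - s)) : ℂ) * (u'' s + (ω : ℂ) ^ 2 * u s)) := by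
      intro s; rw [show -(ω * (α - τ)) = ω * (τ - α) by ring]; push_cast; ring
    simp_rw [hpull]
    rw [integral_const_mul, integral_sin_mul_deriv2_add_sq_mul (fun s hs => hu s (hsub hs))
      (fun s hs => hu' s (hsub hs)) hint]
    push_cast; ring
  have hexp_u : ∫ τ in (0:ℝ)..α, (Real.exp (ω * (τ - α)) : ℂ) * u τ = v α := by
    have h := integral_exp_mul_deriv_add_mul (ω := ω) (c := α) (fun x hx => hv x (hIcc ▸ hx))
      ((hcont_u.sub (continuousOn_const.mul hcont_v)).intervalIntegrable_of_Icc hα)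
    simpa [hv0] using h
  have hcont_u_uIcc : ContinuousOn u (Set.uIcc 0 α) := hIcc ▸ hcont_u
  rw [integral_congr hinner, integral_sub, integral_add, integral_const_mul, integral_mul_const,
    integral_mul_const, integral_ofReal, integral_ofReal, hexp_u,
    integral_exp_mul_sin_mul_sub_self hω, integral_exp_mul_cos_mul_sub_self hω]
  · have hω' : (ω : ℂ) ≠ 0 := ofReal_ne_zero.mpr hω
    push_cast; field_simp; ring
  all_goals exact ContinuousOn.intervalIntegrable (by fun_prop)

/-- Identity expressing the boundary combination `2ω·w'(α) - 2ω²·w(α)` of a clamped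
(`w(0) = w'(0) = 0`) function in terms of `C₁'`, `C₂'` and the source `F = w'''' - ω⁴w`. -/
theorem stmt_12 (α ω : ℝ) (hα : 0 < α) (hω : 0 < ω)
    (w w' w'' w''' w'''' : ℝ → ℂ)
    (hw1 : ∀ x ∈ Set.Icc (0:ℝ) α, HasDerivAt w (w' x) x)
    (hw2 : ∀ x ∈ Set.Icc (0:ℝ) α, HasDerivAt w' (w'' x) x)
    (hw3 : ∀ x ∈ Set.Icc (0:ℝ) α, HasDerivAt w'' (w''' x) x)
    (hw4 : ∀ x ∈ Set.Icc (0:ℝ) α, HasDerivAt w''' (w'''' x) x)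
    (hcont : ContinuousOn w'''' (Set.Icc (0:ℝ) α))
    (hbc0 : w 0 = 0) (hbc1 : w' 0 = 0)
    (F : ℝ → ℂ) (hF : ∀ x, F x = w'''' x - (ω:ℂ)^4 * w x)
    (C₁' C₂' : ℂ)
    (hC₁' : C₁' = w''' α + Complex.I * (ω:ℂ) * w'' α - (ω:ℂ)^2 * w' α
                   - Complex.I * (ω:ℂ)^3 * w α)
    (hC₂' : C₂' = w'' α - (ω:ℂ)^2 * w α) :
    2 * (ω:ℂ) * w' α - 2 * (ω:ℂ)^2 * w α
      = (1 + Complex.I) * C₂'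
          * (1 - ((Real.exp (-(α * ω)) : ℝ) : ℂ)
                 * Complex.exp (Complex.I * ((α * ω : ℝ) : ℂ)))
        + C₁' / (ω:ℂ)
          * ((Real.exp (-(α * ω)) * (Real.sin (α * ω) + Real.cos (α * ω)) - 1 : ℝ) : ℂ)
        + 2 * ∫ τ in (0:ℝ)..α, ∫ s in α..τ,
            ((Real.exp (-(ω * (α - τ))) * Real.sin (ω * (τ - s)) : ℝ) : ℂ) * F s := by
  have hu : ∀ x ∈ Set.Icc 0 α, HasDerivAt (fun x => w'' x - (ω:ℂ) ^ 2 * w x)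
      (w''' x - (ω:ℂ) ^ 2 * w' x) x := fun x hx => (hw3 x hx).sub ((hw1 x hx).const_mul _)
  have hu' : ∀ x ∈ Set.Icc 0 α, HasDerivAt (fun x => w''' x - (ω:ℂ) ^ 2 * w' x)
      (w'''' x - (ω:ℂ) ^ 2 * w'' x) x := fun x hx => (hw4 x hx).sub ((hw2 x hx).const_mul _)
  have hv : ∀ x ∈ Set.Icc 0 α, HasDerivAt (fun x => w' x - (ω:ℂ) * w x)
      ((w'' x - (ω:ℂ) ^ 2 * w x) - ω * (w' x - ω * w x)) x := fun x hx =>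
    ((hw2 x hx).sub ((hw1 x hx).const_mul _)).congr_deriv (by ring)
  have hcont_w'' : ContinuousOn w'' (Set.Icc 0 α) :=
    fun x hx => (hw3 x hx).continuousAt.continuousWithinAt
  have hF' :
      F = fun s => (w'''' s - (ω:ℂ) ^ 2 * w'' s) + (ω:ℂ) ^ 2 * (w'' s - (ω:ℂ) ^ 2 * w s) :=
    funext fun s => by rw [hF]; ring
  rw [hF', integral_exp_mul_integral_sin_mul hω.ne' hα.le hu hu'
    (hcont.sub (continuousOn_const.mul hcont_w'')) hv (by simp [hbc0, hbc1]),
    hC₁', hC₂', mul_comm I, exp_mul_I, ← ofReal_cos, ← ofReal_sin]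
  have hω0 : (ω : ℂ) ≠ 0 := ofReal_ne_zero.mpr hω.ne'
  push_cast
  field_simp
  linear_combination (ω * (w'' α - ω ^ 2 * w α) * cexp (-(ω * α)) * sin (ω * α)) * I_sq
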